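/- arXiv:math/0602512 — 8 statements merged into one kernel-verified Lean document; each statement's English description precedes it below -/
import Mathlib

section
/- For all β₁, β₂, β₃ ∈ ℂ there exist α₁ ∈ ℂ, a₁ ∈ ℝ, α₂, α₃ ∈ ℂ with |α₂|² + |α₃|² = 1, and a real c ≥ 0, such that for all ξ ∈ ℂ: β₁ + β₂ξ + β₃ξ² + α₁ − a₁ξ − conj(α₁)ξ² = c·i·(α₂ξ + α₃)·(−conj(α₃)ξ + conj(α₂)). -/
/-!
Comparing coefficients of `ξ`, the identity says `a₁ = re β₂`, fixes `α₁` through the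
constant term, and leaves `c · (|α₂|² - |α₃|², 2 α₂ conj α₃) = (im β₂, i (β₃ + conj β₁))`.
So the theorem amounts to the surjectivity of the Hopf map `S³ → S²` onto the unit sphere of
`ℝ × ℂ`, after scaling by `c = ‖(im β₂, i (β₃ + conj β₁))‖`.
-/

open Complex ComplexConjugate

noncomputable def hopfMap (a b : ℂ) : ℝ × ℂ :=
  (‖a‖ ^ 2 - ‖b‖ ^ 2, 2 * a * conj b)

theorem exists_hopfMap_eq {t : ℝ} {v : ℂ} (h : t ^ 2 + ‖v‖ ^ 2 = 1) :
    ∃ a b : ℂ, ‖a‖ ^ 2 + ‖b‖ ^ 2 = 1 ∧ hopfMap a b = (t, v) := by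
  have ht : -1 ≤ t := by nlinarith [norm_nonneg v]
  rcases ht.eq_or_lt with rfl | ht
  · have hv : v = 0 := by simpa using h
    exact ⟨0, 1, by simp, by simp [hopfMap, hv]⟩
  · -- `a` real with `a² = (1 + t) / 2`; then `b` is forced by `2 a conj b = v`.
    set r := Real.sqrt ((1 + t) / 2)
    have hr : 0 < r := Real.sqrt_pos.mpr (by linarith)
    have hr2 : r ^ 2 = (1 + t) / 2 := Real.sq_sqrt (by linarith)
    have hb : ‖conj v / (2 * r)‖ ^ 2 = (1 - t) / 2 := by
      rw [norm_div, RCLike.norm_conj, div_pow, mul_comm (2 : ℂ), norm_mul, norm_real,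
        Real.norm_of_nonneg hr.le, Complex.norm_two, mul_pow, hr2]
      have : 1 + t ≠ 0 := by linarith
      field_simp
      linarith
    refine ⟨r, conj v / (2 * r), ?_, ?_⟩
    · rw [hb, norm_real, Real.norm_of_nonneg hr.le, hr2]
      ring
    · have hr0 : (r : ℂ) ≠ 0 := ofReal_ne_zero.mpr hr.ne'
      rw [hopfMap, hb, norm_real, Real.norm_of_nonneg hr.le, hr2, map_div₀, conj_conj]
      simp only [map_mul, map_ofNat, conj_ofReal, Prod.mk.injEq]
      constructor
      · ring
      · field_simp

theorem exists_smul_hopfMap_eq (p : ℝ × ℂ) :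
    ∃ (a b : ℂ) (c : ℝ), ‖a‖ ^ 2 + ‖b‖ ^ 2 = 1 ∧ 0 ≤ c ∧ c • hopfMap a b = p := by
  obtain ⟨s, u⟩ := p
  set c := Real.sqrt (s ^ 2 + ‖u‖ ^ 2)
  have hc2 : c ^ 2 = s ^ 2 + ‖u‖ ^ 2 := Real.sq_sqrt (by positivity)
  have hc : 0 ≤ c := Real.sqrt_nonneg _
  rcases hc.eq_or_lt with hc | hc
  · have hs : s = 0 := by nlinarith [sq_nonneg ‖u‖]
    have hu : u = 0 := by rw [← norm_eq_zero]; nlinarith [sq_nonneg s]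
    exact ⟨1, 0, 0, by simp, le_rfl, by simp [hs, hu, Prod.ext_iff]⟩
  · have hunit : (s / c) ^ 2 + ‖(c⁻¹ : ℂ) * u‖ ^ 2 = 1 := by
      rw [norm_mul, norm_inv, norm_real, Real.norm_of_nonneg hc.le]
      field_simp
      linarith
    obtain ⟨a, b, hab, hh⟩ := exists_hopfMap_eq hunit
    refine ⟨a, b, c, hab, hc.le, ?_⟩
    rw [hh, Prod.smul_mk, smul_eq_mul, real_smul]
    exact Prod.ext (mul_div_cancel₀ s hc.ne') (mul_inv_cancel_left₀ (ofReal_ne_zero.mpr hc.ne') u)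

/-- Every quadratic holomorphic section `η = β₁ + β₂ξ + β₃ξ²` can be put into the
normal form `η = c i ξ`, `c ≥ 0`, by a Euclidean translation followed by a rotation. -/
theorem quadratic_section_normal_form (β₁ β₂ β₃ : ℂ) :
    ∃ (α₁ : ℂ) (a₁ : ℝ) (α₂ α₃ : ℂ) (c : ℝ),
      ‖α₂‖ ^ 2 + ‖α₃‖ ^ 2 = 1 ∧ 0 ≤ c ∧
      ∀ ξ : ℂ,
        β₁ + β₂ * ξ + β₃ * ξ ^ 2 + α₁ - (a₁ : ℂ) * ξ - (starRingEnd ℂ) α₁ * ξ ^ 2 =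
          (c : ℂ) * Complex.I * (α₂ * ξ + α₃) *
            (-(starRingEnd ℂ) α₃ * ξ + (starRingEnd ℂ) α₂) := by
  obtain ⟨a, b, c, hab, hc, hp⟩ := exists_smul_hopfMap_eq (β₂.im, I * (β₃ + conj β₁))
  simp only [hopfMap, Prod.smul_mk, smul_eq_mul, real_smul, Prod.mk.injEq] at hp
  obtain ⟨him, hz⟩ := hp
  have him' : (β₂.im : ℂ) = c * (a * conj a - b * conj b) := by
    rw [mul_conj', mul_conj', ← him]
    push_cast
    ring
  refine ⟨c * I * b * conj a - β₁, β₂.re, a, b, c, hab, hc, fun ξ => ?_⟩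
  simp only [map_sub, map_mul, conj_ofReal, conj_I, conj_conj]
  linear_combination (-ξ) * re_add_im β₂ + ξ * I * him' + ξ ^ 2 * I * hz
    + ξ ^ 2 * (β₃ + conj β₁) * I_sq
end

section
/- Let γ ∈ ℂ with γ ≠ 0 and c ∈ ℝ. Put c' = √(c² + 4|γ|²), ξ₀ = (c − c')/(2i·conj(γ)), α₂ = 1/√(1 + |ξ₀|²) and α₃ = −ξ₀/√(1 + |ξ₀|²). Then |α₂|² + |α₃|² = 1 and for all ξ ∈ ℂ: γ + c·i·ξ + conj(γ)·ξ² = c'·i·(α₂ξ + α₃)·(−conj(α₃)ξ + conj(α₂)). -/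
/-!
The number `ξ₀` is a root of `q ξ = γ + c i ξ + γ̄ ξ²`, and since `q` is a real section its other
root is the antipode `-1/ξ̄₀`. The rotation with `α₂ = 1/√(1 + |ξ₀|²)`, `α₃ = -ξ₀/√(1 + |ξ₀|²)`
sends `ξ₀` to `0` and `-1/ξ̄₀` to `∞`, and its two factors multiply to
`(ξ - ξ₀)(ξ̄₀ ξ + 1)/(1 + |ξ₀|²)`. Comparing coefficients with `q` comes down to the relations
`2γ = -i (c' + c) ξ₀` and `(c' + c)|ξ₀|² = c' - c`, which follow from `c'² = c² + 4|γ|²`.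
-/

open Complex ComplexConjugate

section

variable (z : ℂ)

lemma norm_sq_add_norm_sq_div_sqrt_one_add_norm_sq :
    ‖1 / ((√(1 + ‖z‖ ^ 2) : ℝ) : ℂ)‖ ^ 2 + ‖-z / ((√(1 + ‖z‖ ^ 2) : ℝ) : ℂ)‖ ^ 2 = 1 := by
  have hpos : 0 < 1 + ‖z‖ ^ 2 := by positivity
  rw [norm_div, norm_div, norm_one, norm_neg, norm_real, Real.norm_of_nonneg (Real.sqrt_nonneg _),
    div_pow, div_pow, Real.sq_sqrt hpos.le]
  field_simp

lemma mul_conj_factor_div_sqrt_one_add_norm_sq (ξ : ℂ) :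
    (1 / ((√(1 + ‖z‖ ^ 2) : ℝ) : ℂ) * ξ + -z / ((√(1 + ‖z‖ ^ 2) : ℝ) : ℂ)) *
        (-conj (-z / ((√(1 + ‖z‖ ^ 2) : ℝ) : ℂ)) * ξ + conj (1 / ((√(1 + ‖z‖ ^ 2) : ℝ) : ℂ))) =
      (ξ - z) * (conj z * ξ + 1) / (1 + (‖z‖ : ℂ) ^ 2) := by
  have hpos : 0 < 1 + ‖z‖ ^ 2 := by positivity
  have hsq : ((√(1 + ‖z‖ ^ 2) : ℝ) : ℂ) ^ 2 = 1 + (‖z‖ : ℂ) ^ 2 := by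
    rw [← ofReal_pow, Real.sq_sqrt hpos.le]; push_cast; rfl
  have hr : ((√(1 + ‖z‖ ^ 2) : ℝ) : ℂ) ≠ 0 := ofReal_ne_zero.mpr (Real.sqrt_pos.mpr hpos).ne'
  simp only [map_div₀, map_neg, map_one, conj_ofReal]
  rw [← hsq]
  field_simp
  ring

end

lemma quadratic_mul_one_add_norm_sq_eq {γ z : ℂ} {c c' : ℝ} (hγ : 2 * γ = -(I * (c' + c) * z))
    (hz : (c' + c) * ‖z‖ ^ 2 = c' - c) (ξ : ℂ) :
    (γ + c * I * ξ + conj γ * ξ ^ 2) * (1 + (‖z‖ : ℂ) ^ 2) =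
      c' * I * ((ξ - z) * (conj z * ξ + 1)) := by
  have hγ' : 2 * conj γ = I * (c' + c) * conj z := by
    simpa only [map_mul, map_neg, map_add, map_ofNat, conj_I, conj_ofReal, neg_mul, neg_neg]
      using congrArg conj hγ
  have hz' : ((c' : ℂ) + c) * (z * conj z) = c' - c := by
    rw [mul_conj']; exact_mod_cast hz
  rw [← mul_conj']
  linear_combination (1 + z * conj z) / 2 * hγ + ξ ^ 2 * (1 + z * conj z) / 2 * hγ'
    - I * z / 2 * hz' + I * ξ * hz' + I * ξ ^ 2 * conj z / 2 * hz'

lemma quadratic_section_root_spec {γ : ℂ} (hγ : γ ≠ 0) {c c' : ℝ}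
    (hc' : c' ^ 2 = c ^ 2 + 4 * ‖γ‖ ^ 2) :
    let z := ((c : ℂ) - c') / (2 * I * conj γ)
    2 * γ = -(I * (c' + c) * z) ∧ (c' + c) * ‖z‖ ^ 2 = c' - c := by
  intro z
  have hz : z * (2 * I * conj γ) = c - c' := div_mul_cancel₀ _ (by simpa using hγ)
  have hnorm : ‖z‖ * (2 * ‖γ‖) = |c - c'| := by
    simpa [norm_mul, ← ofReal_sub, Complex.norm_real] using congrArg norm hz
  clear_value z
  constructor
  · apply mul_right_cancel₀ (show conj γ ≠ 0 by simpa using hγ)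
    have : ((c' : ℂ) ^ 2) = c ^ 2 + 4 * (γ * conj γ) := by
      rw [mul_conj']; exact_mod_cast hc'
    linear_combination ((c' + c) / 2 : ℂ) * hz - this / 2
  · have h := congrArg (· ^ 2) hnorm
    simp only [mul_pow, sq_abs] at h
    apply mul_right_cancel₀ (show (4 * ‖γ‖ ^ 2) ≠ 0 by positivity)
    linear_combination (c' + c) * h + (c' - c) * hc'

/-- The explicit rotation taking the section `η = γ + c i ξ + γ̄ ξ²` (γ ≠ 0) to the
normal form `η' = √(c² + 4|γ|²) i ξ'`. -/
theorem rotation_to_normal_form (γ : ℂ) (hγ : γ ≠ 0) (c : ℝ) :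
    let c' : ℝ := Real.sqrt (c ^ 2 + 4 * ‖γ‖ ^ 2)
    let ξ₀ : ℂ := (((c : ℂ) - (c' : ℂ))) / (2 * Complex.I * (starRingEnd ℂ) γ)
    let α₂ : ℂ := 1 / ((Real.sqrt (1 + ‖ξ₀‖ ^ 2) : ℝ) : ℂ)
    let α₃ : ℂ := -ξ₀ / ((Real.sqrt (1 + ‖ξ₀‖ ^ 2) : ℝ) : ℂ)
    ‖α₂‖ ^ 2 + ‖α₃‖ ^ 2 = 1 ∧
      ∀ ξ : ℂ,
        γ + (c : ℂ) * Complex.I * ξ + (starRingEnd ℂ) γ * ξ ^ 2 =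
          (c' : ℂ) * Complex.I * (α₂ * ξ + α₃) *
            (-(starRingEnd ℂ) α₃ * ξ + (starRingEnd ℂ) α₂) := by
  intro c' ξ₀ α₂ α₃
  have hc' : c' ^ 2 = c ^ 2 + 4 * ‖γ‖ ^ 2 := Real.sq_sqrt (by positivity)
  obtain ⟨hγξ₀, hξ₀⟩ := quadratic_section_root_spec hγ hc'
  refine ⟨norm_sq_add_norm_sq_div_sqrt_one_add_norm_sq ξ₀, fun ξ => ?_⟩
  have hpos : (1 + (‖ξ₀‖ : ℂ) ^ 2) ≠ 0 := by exact_mod_cast (by positivity : (1 + ‖ξ₀‖ ^ 2) ≠ 0)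
  rw [mul_assoc _ (α₂ * ξ + α₃), mul_conj_factor_div_sqrt_one_add_norm_sq, mul_div_assoc']
  exact eq_div_of_mul_eq hpos (quadratic_mul_one_add_norm_sq_eq hγξ₀ hξ₀ ξ)
end

section
/- Let ξ : ℝ → ℂ be twice differentiable with |ξ(t)| ≠ 1 for all t, satisfying the geodesic equation ξ''(t) = (conj(ξ(t))/(1 − |ξ(t)|²) + 3·conj(ξ(t))/(1 + |ξ(t)|²))·(ξ'(t))². Then the function I₂(t) = ((1 − |ξ(t)|²)/(1 + |ξ(t)|²)³)·Im(conj(ξ(t))·ξ'(t)) is constant in t. -/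
/-! Write `ρ = |ξ|²` and `w = ξ̄ ξ'`, so that `ρ' = 2 Re w` and `(Im w)' = Im (ξ̄ ξ'')` because
`ξ̄' ξ' = |ξ'|²` is real. Multiplying the geodesic equation by `ξ̄` gives `ξ̄ ξ'' = k(ρ) w²` with the
real coefficient `k(r) = 1/(1 - r) + 3/(1 + r)`, hence `(Im w)' = k(ρ) ρ' Im w`. The density
`λ(r) = (1 - r)/(1 + r)³` of the metric satisfies `λ' = -k λ`, so `λ(ρ)` is an integrating factor
and `λ(ρ) Im w` has zero derivative. -/

open ComplexConjugate

noncomputable def metricDensity (r : ℝ) : ℝ := (1 - r) / (1 + r) ^ 3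

noncomputable def geodesicCoeff (r : ℝ) : ℝ := 1 / (1 - r) + 3 / (1 + r)

theorem hasDerivAt_metricDensity {r : ℝ} (h₁ : 1 - r ≠ 0) (h₂ : 1 + r ≠ 0) :
    HasDerivAt metricDensity (-(geodesicCoeff r * metricDensity r)) r := by
  have hnum := (hasDerivAt_id' r).const_sub 1
  have hden := ((hasDerivAt_id' r).const_add 1).fun_pow 3
  refine (hnum.div hden (pow_ne_zero 3 h₂)).congr_deriv ?_
  simp only [geodesicCoeff, metricDensity]
  field_simp
  ring

theorem geodesicCoeff_mul_conj (z : ℂ) :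
    conj z / (1 - ((‖z‖ : ℝ) : ℂ) ^ 2) + 3 * conj z / (1 + ((‖z‖ : ℝ) : ℂ) ^ 2) =
      (geodesicCoeff (‖z‖ ^ 2) : ℂ) * conj z := by
  simp only [geodesicCoeff]
  push_cast
  ring

theorem im_mul_ofReal_mul_sq (k : ℝ) (z w : ℂ) :
    (z * ((k : ℂ) * z * w ^ 2)).im = k * (2 * (z * w).re) * (z * w).im := by
  have hsq : z * ((k : ℂ) * z * w ^ 2) = (k : ℂ) * (z * w) ^ 2 := by ring
  rw [hsq, Complex.im_ofReal_mul, sq, Complex.mul_im]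
  ring

theorem HasDerivAt.im_conj_mul {f f' : ℝ → ℂ} {f'' : ℂ} {t : ℝ}
    (hf : HasDerivAt f (f' t) t) (hf' : HasDerivAt f' f'' t) :
    HasDerivAt (fun s => (conj (f s) * f' s).im) (conj (f t) * f'').im t := by
  have hconj : HasDerivAt (fun s => conj (f s)) (conj (f' t)) t :=
    Complex.conjCLE.toContinuousLinearMap.hasFDerivAt.comp_hasDerivAt t hf
  refine (Complex.imCLM.hasFDerivAt.comp_hasDerivAt t (hconj.fun_mul hf')).congr_deriv ?_
  rw [Complex.imCLM_apply, Complex.add_im, Complex.conj_mul', ← Complex.ofReal_pow,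
    Complex.ofReal_im, zero_add]

theorem HasDerivAt.mul_zero_of_opposite_rates {u v : ℝ → ℝ} {c t : ℝ}
    (hu : HasDerivAt u (-(c * u t)) t) (hv : HasDerivAt v (c * v t) t) :
    HasDerivAt (fun s => u s * v s) 0 t :=
  (hu.fun_mul hv).congr_deriv (by ring)

/-- The angular momentum `I₂ = ((1 − |ξ|²)/(1 + |ξ|²)³)·Im(ξ̄ ξ')` is a first integral
of the geodesic flow `ξ'' = (ξ̄/(1 − |ξ|²) + 3ξ̄/(1 + |ξ|²))(ξ')²` on the twisting
holomorphic sphere. -/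
theorem angular_momentum_first_integral (ξ ξ' ξ'' : ℝ → ℂ)
    (hξ : ∀ t : ℝ, HasDerivAt ξ (ξ' t) t)
    (hξ' : ∀ t : ℝ, HasDerivAt ξ' (ξ'' t) t)
    (hne : ∀ t : ℝ, ‖ξ t‖ ≠ 1)
    (hgeo : ∀ t : ℝ, ξ'' t =
      ((starRingEnd ℂ) (ξ t) / (1 - ((‖ξ t‖ : ℝ) : ℂ) ^ 2) +
        3 * (starRingEnd ℂ) (ξ t) / (1 + ((‖ξ t‖ : ℝ) : ℂ) ^ 2)) * (ξ' t) ^ 2) :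
    ∀ s t : ℝ,
      (1 - ‖ξ s‖ ^ 2) / (1 + ‖ξ s‖ ^ 2) ^ 3 *
          ((starRingEnd ℂ) (ξ s) * ξ' s).im =
      (1 - ‖ξ t‖ ^ 2) / (1 + ‖ξ t‖ ^ 2) ^ 3 *
          ((starRingEnd ℂ) (ξ t) * ξ' t).im := by
  set I : ℝ → ℝ := fun t => metricDensity (‖ξ t‖ ^ 2) * (conj (ξ t) * ξ' t).im
  have hI : ∀ t, HasDerivAt I 0 t := by
    intro t
    set k := geodesicCoeff (‖ξ t‖ ^ 2) * (2 * (conj (ξ t) * ξ' t).re) with hk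
    have hρ : HasDerivAt (fun s => ‖ξ s‖ ^ 2) (2 * (conj (ξ t) * ξ' t).re) t := by
      simpa [Complex.inner, mul_comm] using (hξ t).norm_sq
    have h₁ : 1 - ‖ξ t‖ ^ 2 ≠ 0 := by
      rw [sub_ne_zero, ne_comm, Ne, pow_eq_one_iff_of_nonneg (norm_nonneg _) two_ne_zero]
      exact hne t
    have hdens : HasDerivAt (fun s => metricDensity (‖ξ s‖ ^ 2))
        (-(k * metricDensity (‖ξ t‖ ^ 2))) t := by
      have hcomp := (hasDerivAt_metricDensity h₁ (by positivity)).comp t hρ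
      exact hcomp.congr_deriv (by rw [hk]; ring)
    have hw : HasDerivAt (fun s => (conj (ξ s) * ξ' s).im) (k * (conj (ξ t) * ξ' t).im) t := by
      refine ((hξ t).im_conj_mul (hξ' t)).congr_deriv ?_
      rw [hgeo t, geodesicCoeff_mul_conj, im_mul_ofReal_mul_sq]
    exact hdens.mul_zero_of_opposite_rates hw
  intro s t
  simpa [I, metricDensity] using
    is_const_of_deriv_eq_zero (fun u => (hI u).differentiableAt) (fun u => (hI u).deriv) s t
end

section
/- Let T ∈ (0, ∞], let ξ : [0, T) → ℂ be twice differentiable with |ξ(t)| < 1 for all t, satisfying ξ''(t) = (conj(ξ(t))/(1 − |ξ(t)|²) + 3·conj(ξ(t))/(1 + |ξ(t)|²))·(ξ'(t))², and let I₁ = ((1 − |ξ(0)|²)/(1 + |ξ(0)|²)³)·|ξ'(0)|² > 0. If |ξ(t)| → 1 as t → T, then |ξ'(t)| → ∞ as t → T. -/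
/-!
Along a geodesic the energy `(1 - |ξ|²) / (1 + |ξ|²)³ · |ξ'|²` has derivative zero: differentiating it
and substituting the geodesic equation, the terms `⟪ξ, ξ'⟫ |ξ'|²` cancel. Hence
`|ξ'|² = I₁ (1 + |ξ|²)³ / (1 - |ξ|²)` on the whole interval, and this tends to `+∞` when `|ξ| → 1`
because `I₁ > 0`.
-/

open Filter Topology

open scoped ComplexConjugate InnerProductSpace

namespace TwistingSphere

/-- The right-hand side of the geodesic equation `ξ'' = geodesicAccel ξ ξ'`. -/
noncomputable def geodesicAccel (z w : ℂ) : ℂ :=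
  (conj z / (1 - ((‖z‖ : ℝ) : ℂ) ^ 2) + 3 * conj z / (1 + ((‖z‖ : ℝ) : ℂ) ^ 2)) * w ^ 2

/-- The conserved quantity `I₁` at position `z` and velocity `w`. -/
noncomputable def energy (z w : ℂ) : ℝ :=
  (1 - ‖z‖ ^ 2) / (1 + ‖z‖ ^ 2) ^ 3 * ‖w‖ ^ 2

lemma inner_geodesicAccel {z : ℂ} (hz : ‖z‖ < 1) (w : ℂ) :
    ⟪w, geodesicAccel z w⟫_ℝ = (1 / (1 - ‖z‖ ^ 2) + 3 / (1 + ‖z‖ ^ 2)) * ⟪z, w⟫_ℝ * ‖w‖ ^ 2 := by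
  have hz2 : ‖z‖ ^ 2 < 1 := pow_lt_one₀ (norm_nonneg _) hz two_ne_zero
  have h1 : (1 : ℂ) - ((‖z‖ ^ 2 : ℝ) : ℂ) ≠ 0 := by
    exact_mod_cast (sub_pos.2 hz2).ne'
  have h2 : (1 : ℂ) + ((‖z‖ ^ 2 : ℝ) : ℂ) ≠ 0 := by
    exact_mod_cast (by positivity : (1 : ℝ) + ‖z‖ ^ 2 ≠ 0)
  have hww : w * conj w = ((‖w‖ ^ 2 : ℝ) : ℂ) := by
    rw [Complex.mul_conj, Complex.normSq_eq_norm_sq]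
  have hcoeff : geodesicAccel z w * conj w =
      (((1 / (1 - ‖z‖ ^ 2) + 3 / (1 + ‖z‖ ^ 2)) * ‖w‖ ^ 2 : ℝ) : ℂ) * (w * conj z) := by
    simp only [geodesicAccel, ← Complex.ofReal_pow] at h1 h2 ⊢
    calc _ = (conj z / (1 - ((‖z‖ ^ 2 : ℝ) : ℂ)) + 3 * conj z / (1 + ((‖z‖ ^ 2 : ℝ) : ℂ))) * w
          * (w * conj w) := by ring
      _ = _ := by rw [hww]; push_cast; field_simp
  rw [Complex.inner, hcoeff, Complex.re_ofReal_mul, ← Complex.inner]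
  ring

section Geodesic

variable {s : Set ℝ} {ξ ξ' ξ'' : ℝ → ℂ}

lemma hasDerivWithinAt_energy_eq_zero {t : ℝ} (hξ : HasDerivWithinAt ξ (ξ' t) s t)
    (hξ' : HasDerivWithinAt ξ' (ξ'' t) s t) (hlt : ‖ξ t‖ < 1)
    (hgeo : ξ'' t = geodesicAccel (ξ t) (ξ' t)) :
    HasDerivWithinAt (fun u ↦ energy (ξ u) (ξ' u)) 0 s t := by
  have hpos : (1 : ℝ) + ‖ξ t‖ ^ 2 ≠ 0 := by positivity
  have hlt2 : (1 : ℝ) - ‖ξ t‖ ^ 2 ≠ 0 := (sub_pos.2 (pow_lt_one₀ (norm_nonneg _) hlt two_ne_zero)).ne'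
  have hspeed := hξ'.norm_sq
  rw [hgeo, inner_geodesicAccel hlt] at hspeed
  have hnum := hξ.norm_sq.const_sub 1
  have hden := (hξ.norm_sq.const_add 1).pow 3
  refine ((hnum.div hden (pow_ne_zero 3 hpos)).mul hspeed).congr_deriv ?_
  simp only [Pi.div_apply, Pi.pow_apply]
  field_simp
  ring

lemma energy_eq_of_geodesic (hs : Convex ℝ s)
    (hξ : ∀ t ∈ s, HasDerivWithinAt ξ (ξ' t) s t) (hξ' : ∀ t ∈ s, HasDerivWithinAt ξ' (ξ'' t) s t)
    (hlt : ∀ t ∈ s, ‖ξ t‖ < 1) (hgeo : ∀ t ∈ s, ξ'' t = geodesicAccel (ξ t) (ξ' t))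
    {t₀ t : ℝ} (ht₀ : t₀ ∈ s) (ht : t ∈ s) :
    energy (ξ t) (ξ' t) = energy (ξ t₀) (ξ' t₀) := by
  have hderiv : ∀ u ∈ s, HasDerivWithinAt (fun u ↦ energy (ξ u) (ξ' u)) 0 s u := fun u hu ↦
    hasDerivWithinAt_energy_eq_zero (hξ u hu) (hξ' u hu) (hlt u hu) (hgeo u hu)
  have h := hs.norm_image_sub_le_of_norm_hasDerivWithin_le hderiv (fun _ _ ↦ norm_zero.le) ht₀ ht
  rw [zero_mul, norm_le_zero_iff, sub_eq_zero] at h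
  exact h

end Geodesic

lemma norm_sq_eq_of_energy_eq {z w : ℂ} {I : ℝ} (hz : ‖z‖ < 1) (h : energy z w = I) :
    ‖w‖ ^ 2 = I * (1 + ‖z‖ ^ 2) ^ 3 / (1 - ‖z‖ ^ 2) := by
  have hlt2 : (1 : ℝ) - ‖z‖ ^ 2 ≠ 0 := (sub_pos.2 (pow_lt_one₀ (norm_nonneg _) hz two_ne_zero)).ne'
  have hpos : (1 : ℝ) + ‖z‖ ^ 2 ≠ 0 := by positivity
  rw [← h, energy]
  field_simp

lemma tendsto_norm_atTop_of_energy_eq {α : Type*} {l : Filter α} {z w : α → ℂ} {I : ℝ}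
    (hI : 0 < I) (hlim : Tendsto (fun x ↦ ‖z x‖) l (𝓝 1)) (hlt : ∀ᶠ x in l, ‖z x‖ < 1)
    (henergy : ∀ᶠ x in l, energy (z x) (w x) = I) :
    Tendsto (fun x ↦ ‖w x‖) l atTop := by
  have hsq : Tendsto (fun x ↦ ‖z x‖ ^ 2) l (𝓝 1) := by simpa using hlim.pow 2
  have hgap : Tendsto (fun x ↦ 1 - ‖z x‖ ^ 2) l (𝓝[>] 0) := by
    refine tendsto_nhdsWithin_iff.2 ⟨by simpa using (tendsto_const_nhds (x := (1 : ℝ))).sub hsq, ?_⟩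
    filter_upwards [hlt] with x hx
    exact sub_pos.2 (pow_lt_one₀ (norm_nonneg _) hx two_ne_zero)
  have hnum : Tendsto (fun x ↦ I * (1 + ‖z x‖ ^ 2) ^ 3) l (𝓝 (I * 8)) := by
    convert tendsto_const_nhds.mul ((tendsto_const_nhds.add hsq).pow 3) using 2
    norm_num
  have hspeed : Tendsto (fun x ↦ ‖w x‖ ^ 2) l atTop := by
    refine (hnum.pos_mul_atTop (by positivity) hgap.inv_tendsto_nhdsGT_zero).congr' ?_
    filter_upwards [hlt, henergy] with x hx hx'
    rw [norm_sq_eq_of_energy_eq hx hx', div_eq_mul_inv, Pi.inv_apply]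
  exact (Real.tendsto_sqrt_atTop.comp hspeed).congr fun x ↦ Real.sqrt_sq (norm_nonneg _)

lemma eventually_mem_Ico_comap_nhdsLT {T : EReal} (hT : 0 < T) :
    ∀ᶠ t : ℝ in comap (fun t : ℝ ↦ (t : EReal)) (𝓝[<] T), 0 ≤ t ∧ (t : EReal) < T := by
  have hmem : Set.Ioo 0 T ∈ 𝓝[<] T := Ioo_mem_nhdsLT hT
  filter_upwards [preimage_mem_comap hmem] with t ht
  exact ⟨EReal.coe_nonneg.1 ht.1.le, ht.2⟩

end TwistingSphere

open TwistingSphere in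
/-- Blow-up of the geodesic flow at the lagrangian circle: for a geodesic `ξ` of the
twisting holomorphic sphere defined on `[0, T)` (`T ∈ (0,∞]`), staying in `|ξ| < 1`,
with positive energy `I₁`, if `|ξ(t)| → 1` as `t → T` then `|ξ'(t)| → ∞` as `t → T`. -/
theorem geodesic_blow_up (T : EReal) (hT : 0 < T) (ξ ξ' ξ'' : ℝ → ℂ)
    (D : Set ℝ) (hD : D = {t : ℝ | 0 ≤ t ∧ (t : EReal) < T})
    (hξ : ∀ t ∈ D, HasDerivWithinAt ξ (ξ' t) D t)
    (hξ' : ∀ t ∈ D, HasDerivWithinAt ξ' (ξ'' t) D t)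
    (hlt : ∀ t ∈ D, ‖ξ t‖ < 1)
    (hgeo : ∀ t ∈ D, ξ'' t =
      ((starRingEnd ℂ) (ξ t) / (1 - ((‖ξ t‖ : ℝ) : ℂ) ^ 2) +
        3 * (starRingEnd ℂ) (ξ t) / (1 + ((‖ξ t‖ : ℝ) : ℂ) ^ 2)) * (ξ' t) ^ 2)
    (hI₁ : 0 < (1 - ‖ξ 0‖ ^ 2) / (1 + ‖ξ 0‖ ^ 2) ^ 3 *
      ‖ξ' 0‖ ^ 2)
    (hlim : Filter.Tendsto (fun t : ℝ => ‖ξ t‖)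
      (Filter.comap (fun t : ℝ => (t : EReal)) (nhdsWithin T (Set.Iio T))) (nhds 1)) :
    Filter.Tendsto (fun t : ℝ => ‖ξ' t‖)
      (Filter.comap (fun t : ℝ => (t : EReal)) (nhdsWithin T (Set.Iio T))) Filter.atTop := by
  subst hD
  have hconvex : Convex ℝ {t : ℝ | 0 ≤ t ∧ (t : EReal) < T} :=
    Set.OrdConnected.convex ⟨fun _ hx _ hy _ hu ↦
      ⟨hx.1.trans hu.1, lt_of_le_of_lt (EReal.coe_le_coe_iff.2 hu.2) hy.2⟩⟩
  have hevent := eventually_mem_Ico_comap_nhdsLT hT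
  refine tendsto_norm_atTop_of_energy_eq hI₁ hlim
    (hevent.mono fun t ht ↦ hlt t ht) (hevent.mono fun t ht ↦ ?_)
  exact energy_eq_of_geodesic hconvex hξ hξ' hlt hgeo ⟨le_rfl, hT⟩ ht
end

section
/- Let I₁ > 0, let T ∈ (0, ∞], and let R : [0, T) → ℝ be differentiable with R(0) = 0, 0 ≤ R(t) < 1 for all t, and R'(t) = √(I₁·(1 + R(t)²)³/(1 − R(t)²)) for all t. Then T ≤ I₁^{−1/2}·∫₀¹ √((1 − r²)/(1 + r²)³) dr; in particular T is finite. -/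
/-!
Along the geodesic, `√((1 - r²)/(1 + r²)³) · R'` is the constant `√I₁`, so with
`F x = ∫₀ˣ √((1 - r²)/(1 + r²)³) dr` separation of variables gives `F (R t) = √I₁ · t`.
Since `0 ≤ R t < 1` and the integrand is nonnegative, `F (R t) ≤ F 1`, which bounds every
time `t < T` by `F 1 / √I₁`.
-/

open Set Real intervalIntegral

theorem Convex.sub_eq_mul_sub_of_hasDerivWithinAt_const {D : Set ℝ} (hD : Convex ℝ D)
    {g : ℝ → ℝ} {c : ℝ} (hg : ∀ t ∈ D, HasDerivWithinAt g c D t) {s t : ℝ} (hs : s ∈ D)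
    (ht : t ∈ D) : g t - g s = c * (t - s) := by
  have hderiv : ∀ u ∈ D, HasDerivWithinAt (fun u => g u - c * u) (c - c * 1) D u :=
    fun u hu => (hg u hu).sub ((hasDerivWithinAt_id u D).const_mul c)
  have h := hD.norm_image_sub_le_of_norm_hasDerivWithin_le (C := 0) hderiv (by simp) hs ht
  rw [zero_mul, norm_le_zero_iff] at h
  linarith

theorem sqrt_div_mul_sqrt_mul_div {a b : ℝ} (ha : 0 < a) (hb : 0 < b) (c : ℝ) :
    √(a / b) * √(c * b / a) = √c := by
  rw [← sqrt_mul (by positivity)]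
  congr 1
  field_simp

theorem convex_setOf_nonneg_and_coe_lt (T : EReal) :
    Convex ℝ {t : ℝ | 0 ≤ t ∧ (t : EReal) < T} :=
  (ordConnected_Ici.inter (ordConnected_Iio.preimage_mono EReal.coe_strictMono.monotone)).convex

theorem EReal.le_coe_of_forall_nonneg_coe_lt {T : EReal} {B : ℝ} (hB : 0 ≤ B)
    (h : ∀ t : ℝ, 0 ≤ t → (t : EReal) < T → t ≤ B) : T ≤ B := by
  refine le_of_forall_lt_imp_le_of_dense fun x hx => ?_
  induction x using EReal.rec with
  | bot => exact bot_le
  | coe x =>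
    rcases le_total 0 x with hx0 | hx0
    · exact EReal.coe_le_coe_iff.2 (h x hx0 hx)
    · exact EReal.coe_le_coe_iff.2 (hx0.trans hB)
  | top => exact absurd hx not_top_lt

theorem finite_time_to_circle_general (I₁ : ℝ) (hI₁ : 0 < I₁) (T : EReal)
    (R : ℝ → ℝ) (D : Set ℝ) (hD : D = {t : ℝ | 0 ≤ t ∧ (t : EReal) < T})
    (hR0 : R 0 = 0)
    (hrange : ∀ t ∈ D, 0 ≤ R t ∧ R t < 1)
    (hR' : ∀ t ∈ D, HasDerivWithinAt R
      (Real.sqrt (I₁ * (1 + R t ^ 2) ^ 3 / (1 - R t ^ 2))) D t) :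
    T ≤ ((I₁ ^ (-(1 : ℝ) / 2) *
      ∫ r in (0 : ℝ)..1, Real.sqrt ((1 - r ^ 2) / (1 + r ^ 2) ^ 3) : ℝ) : EReal) := by
  have hmem {t : ℝ} : t ∈ D ↔ 0 ≤ t ∧ (t : EReal) < T := hD ▸ Iff.rfl
  have hDconv : Convex ℝ D := hD ▸ convex_setOf_nonneg_and_coe_lt T
  set f : ℝ → ℝ := fun r => √((1 - r ^ 2) / (1 + r ^ 2) ^ 3)
  have hf : Continuous f :=
    continuous_sqrt.comp <| Continuous.div (by fun_prop) (by fun_prop) fun r => by positivity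
  have hF (x : ℝ) : HasDerivAt (fun x => ∫ r in 0..x, f r) (f x) x :=
    (hf.integral_hasStrictDerivAt 0 x).hasDerivAt
  have hsep : ∀ t ∈ D, ∫ r in 0..R t, f r = √I₁ * t := by
    intro t ht
    obtain ⟨ht0, htT⟩ := hmem.1 ht
    have h0 : (0 : ℝ) ∈ D := hmem.2 ⟨le_rfl, (EReal.coe_le_coe_iff.2 ht0).trans_lt htT⟩
    have hspeed : ∀ u ∈ D, HasDerivWithinAt (fun u => ∫ r in 0..R u, f r) (√I₁) D u := by
      intro u hu
      have hRu : 0 < 1 - R u ^ 2 := by nlinarith [hrange u hu]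
      exact ((hF (R u)).comp_hasDerivWithinAt u (hR' u hu)).congr_deriv
        (sqrt_div_mul_sqrt_mul_div hRu (by positivity) I₁)
    simpa [hR0] using
      hDconv.sub_eq_mul_sub_of_hasDerivWithinAt_const hspeed h0 ht
  have hbound : ∀ t ∈ D, √I₁ * t ≤ ∫ r in 0..1, f r := fun t ht =>
    hsep t ht ▸ integral_mono_interval le_rfl (hrange t ht).1 (hrange t ht).2.le
      (Filter.Eventually.of_forall fun _ => sqrt_nonneg _) (hf.intervalIntegrable _ _)
  have hrpow : I₁ ^ (-(1 : ℝ) / 2) = (√I₁)⁻¹ := by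
    rw [sqrt_eq_rpow, ← rpow_neg hI₁.le]
    norm_num
  refine EReal.le_coe_of_forall_nonneg_coe_lt ?_ fun t ht0 htT => ?_
  · exact mul_nonneg (rpow_nonneg hI₁.le _)
      (integral_nonneg zero_le_one fun _ _ => sqrt_nonneg _)
  · rw [hrpow, inv_mul_eq_div, le_div_iff₀ (sqrt_pos.2 hI₁), mul_comm]
    exact hbound t (hmem.2 ⟨ht0, htT⟩)

/-- A zero angular momentum geodesic of energy `I₁ > 0` starting at the pole `R = 0`
reaches the lagrangian circle within finite time: its maximal existence time satisfies
`T ≤ I₁^{-1/2} ∫₀¹ √((1 − r²)/(1 + r²)³) dr`. -/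
theorem finite_time_to_circle (I₁ : ℝ) (hI₁ : 0 < I₁) (T : EReal) (hT : 0 < T)
    (R : ℝ → ℝ) (D : Set ℝ) (hD : D = {t : ℝ | 0 ≤ t ∧ (t : EReal) < T})
    (hR0 : R 0 = 0)
    (hrange : ∀ t ∈ D, 0 ≤ R t ∧ R t < 1)
    (hR' : ∀ t ∈ D, HasDerivWithinAt R
      (Real.sqrt (I₁ * (1 + R t ^ 2) ^ 3 / (1 - R t ^ 2))) D t) :
    T ≤ ((I₁ ^ (-(1 : ℝ) / 2) *
      ∫ r in (0 : ℝ)..1, Real.sqrt ((1 - r ^ 2) / (1 + r ^ 2) ^ 3) : ℝ) : EReal) :=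
  finite_time_to_circle_general I₁ hI₁ T R D hD hR0 hrange hR'
end

section
/- Let I₁ > 0, T ∈ (0, ∞], and let R : [0, T) → ℝ be differentiable with R(0) = 0, 0 ≤ R(t) < 1 for all t, R'(t) = √(I₁·(1 + R(t)²)³/(1 − R(t)²)) for all t, and R(t) → 1 as t → T. Then T = I₁^{−1/2}·∫₀¹ √((1 − r²)/(1 + r²)³) dr. -/
/-!
Along the flow the radius moves with speed `R' = √I₁ / f(R)`, where
`f(r) = √((1 − r²)/(1 + r²)³)`. Hence, with `F` the primitive of `f` vanishing at `0`,
`t ↦ F (R t) − √I₁ t` has derivative zero and `F (R t) = √I₁ t` on `[0, T)`. As `F` is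
monotone, `t ≤ F 1 / √I₁` on `[0, T)`, so `T` is finite, and letting `t → T` gives
`√I₁ T = F 1`.
-/

open Real Filter Set Topology

theorem Convex.eq_add_mul_sub_of_hasDerivWithinAt {D : Set ℝ} (hD : Convex ℝ D) {g : ℝ → ℝ}
    {c : ℝ} (hg : ∀ t ∈ D, HasDerivWithinAt g c D t) {a t : ℝ} (ha : a ∈ D) (ht : t ∈ D) :
    g t = g a + c * (t - a) := by
  have hderiv : ∀ s ∈ D, HasDerivWithinAt (fun s => g s - c * s) 0 D s := fun s hs => by
    simpa using (hg s hs).fun_sub ((hasDerivWithinAt_id s D).const_mul c)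
  have h :=
    hD.norm_image_sub_le_of_norm_hasDerivWithin_le (C := 0) hderiv (fun _ _ => by simp) ha ht
  rw [zero_mul, norm_le_zero_iff, sub_eq_zero] at h
  linarith

theorem EReal.comap_coe_nhdsLT (x : ℝ) :
    comap ((↑) : ℝ → EReal) (𝓝[<] (x : EReal)) = 𝓝[<] x := by
  rw [nhdsWithin, comap_inf, ← EReal.isEmbedding_coe.isInducing.nhds_eq_comap, comap_principal]
  congr
  ext
  simp

theorem EReal.le_coe_of_forall_coe_lt_imp_le {T : EReal} {M : ℝ}
    (h : ∀ t : ℝ, (t : EReal) < T → t ≤ M) : T ≤ M := by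
  by_contra! hlt
  obtain ⟨x, hMx, hxT⟩ := EReal.lt_iff_exists_real_btwn.1 hlt
  exact (EReal.coe_lt_coe_iff.1 hMx).not_ge (h x hxT)

noncomputable section

def travelIntegrand (r : ℝ) : ℝ := √((1 - r ^ 2) / (1 + r ^ 2) ^ 3)

def travelPrimitive (x : ℝ) : ℝ := ∫ r in (0 : ℝ)..x, travelIntegrand r

theorem continuous_travelIntegrand : Continuous travelIntegrand := by
  unfold travelIntegrand
  fun_prop (disch := intro; positivity)

theorem hasDerivAt_travelPrimitive (x : ℝ) :
    HasDerivAt travelPrimitive (travelIntegrand x) x :=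
  intervalIntegral.integral_hasDerivAt_right (continuous_travelIntegrand.intervalIntegrable 0 x)
    (continuous_travelIntegrand.stronglyMeasurableAtFilter _ _)
    continuous_travelIntegrand.continuousAt

theorem monotone_travelPrimitive : Monotone travelPrimitive :=
  monotone_of_deriv_nonneg (fun x => (hasDerivAt_travelPrimitive x).differentiableAt)
    fun x => (hasDerivAt_travelPrimitive x).deriv ▸ sqrt_nonneg _

theorem travelIntegrand_mul_sqrt {I r : ℝ} (hr : r ^ 2 < 1) :
    travelIntegrand r * √(I * (1 + r ^ 2) ^ 3 / (1 - r ^ 2)) = √I := by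
  have h₁ : 0 < 1 - r ^ 2 := by linarith
  rw [travelIntegrand, ← sqrt_mul (div_nonneg h₁.le (by positivity))]
  congr 1
  field_simp

theorem travelPrimitive_comp_eq_sqrt_mul {I : ℝ} {R : ℝ → ℝ} {D : Set ℝ}
    (hD : Convex ℝ D) (h0 : 0 ∈ D) (hR0 : R 0 = 0) (hrange : ∀ t ∈ D, 0 ≤ R t ∧ R t < 1)
    (hR' : ∀ t ∈ D, HasDerivWithinAt R (√(I * (1 + R t ^ 2) ^ 3 / (1 - R t ^ 2))) D t)
    {t : ℝ} (ht : t ∈ D) :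
    travelPrimitive (R t) = √I * t := by
  have hderiv : ∀ s ∈ D, HasDerivWithinAt (travelPrimitive ∘ R) (√I) D s := fun s hs => by
    obtain ⟨hR_nonneg, hR_lt⟩ := hrange s hs
    rw [← travelIntegrand_mul_sqrt (r := R s) (by nlinarith)]
    exact (hasDerivAt_travelPrimitive (R s)).comp_hasDerivWithinAt s (hR' s hs)
  have h := hD.eq_add_mul_sub_of_hasDerivWithinAt hderiv h0 ht
  simpa [hR0, travelPrimitive] using h

end

/-- The exact travel time of a zero angular momentum geodesic of energy `I₁ > 0` from
the pole `R = 0` to the lagrangian circle `R = 1`: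
`T = I₁^{-1/2} ∫₀¹ √((1 − r²)/(1 + r²)³) dr`. -/
theorem exact_travel_time (I₁ : ℝ) (hI₁ : 0 < I₁) (T : EReal) (hT : 0 < T)
    (R : ℝ → ℝ) (D : Set ℝ) (hD : D = {t : ℝ | 0 ≤ t ∧ (t : EReal) < T})
    (hR0 : R 0 = 0)
    (hrange : ∀ t ∈ D, 0 ≤ R t ∧ R t < 1)
    (hR' : ∀ t ∈ D, HasDerivWithinAt R
      (Real.sqrt (I₁ * (1 + R t ^ 2) ^ 3 / (1 - R t ^ 2))) D t)
    (hlim : Filter.Tendsto R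
      (Filter.comap (fun t : ℝ => (t : EReal)) (nhdsWithin T (Set.Iio T))) (nhds 1)) :
    T = ((I₁ ^ (-(1 : ℝ) / 2) *
      ∫ r in (0 : ℝ)..1, Real.sqrt ((1 - r ^ 2) / (1 + r ^ 2) ^ 3) : ℝ) : EReal) := by
  have hc : 0 < √I₁ := sqrt_pos.2 hI₁
  have hconv : Convex ℝ D :=
    hD ▸ (convex_Ici 0).inter (ordConnected_Iio.preimage_mono EReal.coe_strictMono.monotone).convex
  have h0 : (0 : ℝ) ∈ D := hD ▸ ⟨le_rfl, mod_cast hT⟩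
  have htravel (t : ℝ) (ht : t ∈ D) : travelPrimitive (R t) = √I₁ * t :=
    travelPrimitive_comp_eq_sqrt_mul hconv h0 hR0 hrange hR' ht
  have hbound : ∀ t ∈ D, t ≤ travelPrimitive 1 / √I₁ := fun t ht => by
    rw [le_div_iff₀ hc, mul_comm, ← htravel t ht]
    exact monotone_travelPrimitive (hrange t ht).2.le
  have hT_le : T ≤ ↑(travelPrimitive 1 / √I₁) := by
    refine EReal.le_coe_of_forall_coe_lt_imp_le fun t ht => ?_
    rcases le_or_gt 0 t with ht0 | ht0
    · exact hbound t (hD ▸ ⟨ht0, ht⟩)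
    · exact ht0.le.trans (hbound 0 h0)
  obtain ⟨τ, rfl⟩ : ∃ τ : ℝ, T = τ :=
    ⟨T.toReal, (EReal.coe_toReal (ne_top_of_le_ne_top (EReal.coe_ne_top _) hT_le)
      (ne_bot_of_gt hT)).symm⟩
  have hτ : 0 < τ := mod_cast hT
  rw [EReal.comap_coe_nhdsLT] at hlim
  have hkey_near : travelPrimitive ∘ R =ᶠ[𝓝[<] τ] fun t => √I₁ * t :=
    eventually_of_mem (Ioo_mem_nhdsLT hτ) fun t ht => htravel t (hD ▸ ⟨ht.1.le, mod_cast ht.2⟩)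
  have hfinal : √I₁ * τ = travelPrimitive 1 :=
    tendsto_nhds_unique (((continuous_const_mul _).tendsto τ).mono_left nhdsWithin_le_nhds)
      (((hasDerivAt_travelPrimitive 1).continuousAt.tendsto.comp hlim).congr' hkey_near)
  rw [neg_div, rpow_neg hI₁.le, ← sqrt_eq_rpow]
  change (τ : EReal) = ↑((√I₁)⁻¹ * travelPrimitive 1)
  rw [← hfinal, inv_mul_cancel_left₀ hc.ne']
end

section
/- For every real R with 0 ≤ R < 1: ∫₀^R √((1 − r²)/(1 + r²)³) dr = Σ_{k=0}^{∞} Σ_{l=0}^{∞} (−1)^l · ((1/2)_{k+l} · (−1/2)_k · (3/2)_l)/((3/2)_{k+l} · k! · l!) · R^{2(k+l)+1}, where (a)_n = Γ(a+n)/Γ(a) denotes the Pochhammer symbol. -/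
/-!
Put `x = r²`. Both factors of the integrand are binomial series,
`√(1 - x) = ∑ (-1/2)ₖ/k! xᵏ` and `(1 + x)^(-3/2) = ∑ (3/2)ₗ/l! (-x)ˡ`, so for `|x| < 1` the
integrand is an absolutely convergent double series in `r`. On `[0, R]` this series is dominated
by its absolute value at `r = R`, hence it may be integrated term by term, and the factor
`1/(2n + 1)` produced by `∫₀ᴿ r²ⁿ dr` is `(1/2)ₙ/(3/2)ₙ`.
-/

/-- The Pochhammer symbol `(a)ₙ = Γ(a + n)/Γ(a)` for real `a`. -/
noncomputable def pochhammerReal (a : ℝ) (n : ℕ) : ℝ :=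
  Real.Gamma (a + n) / Real.Gamma a

open MeasureTheory

theorem pochhammerReal_eq_ascPochhammer_eval {a : ℝ} (ha : ∀ k : ℕ, a ≠ -k) (n : ℕ) :
    pochhammerReal a n = (ascPochhammer ℝ n).eval a := by
  induction n with
  | zero => simp [pochhammerReal, div_self (Real.Gamma_ne_zero ha)]
  | succ n ih =>
    have han : a + n ≠ 0 := fun h => ha n (by linarith)
    rw [ascPochhammer_succ_eval, ← ih, pochhammerReal, pochhammerReal, Nat.cast_succ,
      ← add_assoc, Real.Gamma_add_one han]
    ring

theorem pochhammerReal_eq_factorial_mul_multichoose {a : ℝ} (ha : ∀ k : ℕ, a ≠ -k) (n : ℕ) :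
    pochhammerReal a n = n.factorial * Ring.multichoose a n := by
  rw [pochhammerReal_eq_ascPochhammer_eval ha, ← Polynomial.ascPochhammer_smeval_eq_eval,
    ← Ring.factorial_nsmul_multichoose_eq_ascPochhammer, nsmul_eq_mul]

theorem pochhammerReal_mul_add_nat {a : ℝ} {n : ℕ} (ha : a ≠ 0) (han : a + n ≠ 0) :
    pochhammerReal a n * (a + n) = a * pochhammerReal (a + 1) n := by
  rw [pochhammerReal, pochhammerReal, Real.Gamma_add_one ha, add_right_comm,
    Real.Gamma_add_one han]
  rcases eq_or_ne (Real.Gamma a) 0 with h | h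
  · simp [h]
  · field_simp

theorem pochhammerReal_pos {a : ℝ} (ha : 0 < a) (n : ℕ) : 0 < pochhammerReal a n :=
  div_pos (Real.Gamma_pos_of_pos (by positivity)) (Real.Gamma_pos_of_pos ha)

theorem Real.hasSum_multichoose_mul_pow (a : ℝ) {x : ℝ} (hx : |x| < 1) :
    HasSum (fun n => Ring.multichoose a n * x ^ n) ((1 - x) ^ (-a)) := by
  have h := (one_div_one_sub_rpow_hasFPowerSeriesOnBall_zero a).hasSum (y := x)
    (by simpa [enorm_eq_nnnorm, ← NNReal.coe_lt_coe] using hx)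
  rw [Real.rpow_neg (by linarith [le_abs_self x]), inv_eq_one_div]
  simpa [FormalMultilinearSeries.ofScalars_apply_eq, Ring.multichoose_eq, mul_comm] using h

theorem HasSum.mul_pow_add {a b : ℕ → ℝ} {x A B : ℝ}
    (ha : HasSum (fun k => a k * x ^ k) A) (hb : HasSum (fun l => b l * x ^ l) B) :
    HasSum (fun p : ℕ × ℕ => a p.1 * b p.2 * x ^ (p.1 + p.2)) (A * B) := by
  have hab := ha.mul hb <| summable_mul_of_summable_norm (f := fun k => a k * x ^ k)
    (g := fun l => b l * x ^ l) (summable_norm_iff.mpr ha.summable)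
    (summable_norm_iff.mpr hb.summable)
  have hterm : (fun p : ℕ × ℕ => a p.1 * b p.2 * x ^ (p.1 + p.2)) =
      fun p => a p.1 * x ^ p.1 * (b p.2 * x ^ p.2) := by
    funext p
    ring
  rwa [hterm]

theorem hasSum_integral_of_hasSum_mul_pow {ι : Type*} [Countable ι] {c : ι → ℝ} {e : ι → ℕ}
    {f : ℝ → ℝ} {R : ℝ} (hR : 0 ≤ R)
    (hf : ∀ r ∈ Set.Icc 0 R, HasSum (fun i => c i * r ^ e i) (f r)) :
    HasSum (fun i => c i * (R ^ (e i + 1) / (e i + 1))) (∫ r in 0..R, f r) := by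
  have hbound : Summable fun i => |c i| * R ^ e i := by
    simpa [abs_mul, abs_pow, abs_of_nonneg hR] using (hf R ⟨hR, le_rfl⟩).summable.abs
  have hIcc : ∀ r ∈ Set.uIoc 0 R, r ∈ Set.Icc 0 R := fun r hr => by
    rw [Set.uIoc_of_le hR] at hr
    exact Set.Ioc_subset_Icc_self hr
  have h := intervalIntegral.hasSum_integral_of_dominated_convergence
    (fun i _ => |c i| * R ^ e i)
    (fun i => (by fun_prop : Continuous fun r : ℝ => c i * r ^ e i).aestronglyMeasurable)
    (fun i => ae_of_all _ fun r hr => by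
      have hr := hIcc r hr
      rw [Real.norm_eq_abs, abs_mul, abs_pow, abs_of_nonneg hr.1]
      exact mul_le_mul_of_nonneg_left (pow_le_pow_left₀ hr.1 hr.2 _) (abs_nonneg _))
    (ae_of_all _ fun _ _ => hbound) (intervalIntegrable_const (μ := volume))
    (ae_of_all _ fun r hr => hf r (hIcc r hr))
  simpa [integral_pow] using h

/-- `Ring.multichoose a n` is `(a)ₙ / n!`. -/
noncomputable def travelTimeCoeff (p : ℕ × ℕ) : ℝ :=
  Ring.multichoose (-(1 / 2)) p.1 * (Ring.multichoose (3 / 2) p.2 * (-1) ^ p.2)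

theorem sqrt_one_sub_div_one_add_pow_three {x : ℝ} (hx : |x| ≤ 1) :
    √((1 - x) / (1 + x) ^ 3) = (1 - x) ^ (1 / 2 : ℝ) * (1 + x) ^ (-(3 / 2) : ℝ) := by
  have h1 : 0 ≤ 1 - x := by linarith [le_abs_self x]
  have h2 : 0 ≤ 1 + x := by linarith [neg_abs_le x]
  rw [Real.rpow_neg h2, ← div_eq_mul_inv, Real.sqrt_div' _ (by positivity), Real.sqrt_eq_rpow,
    Real.sqrt_eq_rpow, ← Real.rpow_natCast, ← Real.rpow_mul h2]
  norm_num

theorem hasSum_travelTimeCoeff_mul_pow {x : ℝ} (hx : |x| < 1) :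
    HasSum (fun p => travelTimeCoeff p * x ^ (p.1 + p.2)) (√((1 - x) / (1 + x) ^ 3)) := by
  have h1 := Real.hasSum_multichoose_mul_pow (-(1 / 2)) hx
  have h2 := Real.hasSum_multichoose_mul_pow (3 / 2) (x := -x) (by rwa [abs_neg])
  rw [neg_neg] at h1
  rw [sub_neg_eq_add] at h2
  simp only [neg_pow x, ← mul_assoc] at h2
  rw [sqrt_one_sub_div_one_add_pow_three hx.le]
  simpa only [travelTimeCoeff, mul_assoc] using h1.mul_pow_add h2

theorem appellTerm_eq_travelTimeCoeff_mul (k l : ℕ) (R : ℝ) :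
    (-1 : ℝ) ^ l *
        (pochhammerReal (1 / 2) (k + l) * pochhammerReal (-(1 / 2)) k *
            pochhammerReal (3 / 2) l) /
          (pochhammerReal (3 / 2) (k + l) * (Nat.factorial k) * (Nat.factorial l)) *
        R ^ (2 * (k + l) + 1) =
      travelTimeCoeff (k, l) * (R ^ (2 * (k + l) + 1) / ((2 * (k + l) : ℕ) + 1)) := by
  have hneg : ∀ n : ℕ, -(1 / 2 : ℝ) ≠ -n := fun n h => by
    have : (n : ℝ) * 2 = 1 := by linarith
    norm_cast at this
    omega
  have hpos : ∀ n : ℕ, (3 / 2 : ℝ) ≠ -n := fun n h => by linarith [n.cast_nonneg (α := ℝ)]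
  have hshift : pochhammerReal (3 / 2) (k + l) =
      (2 * (k + l : ℕ) + 1) * pochhammerReal (1 / 2) (k + l) := by
    have := pochhammerReal_mul_add_nat (a := 1 / 2) (n := k + l) (by norm_num) (by positivity)
    norm_num at this
    push_cast
    linear_combination -2 * this
  have := (pochhammerReal_pos (a := 1 / 2) (by norm_num) (k + l)).ne'
  rw [hshift, pochhammerReal_eq_factorial_mul_multichoose hneg,
    pochhammerReal_eq_factorial_mul_multichoose hpos, travelTimeCoeff]
  field_simp
  push_cast
  ring

/-- The travel-time integral `∫₀ᴿ √((1 − r²)/(1 + r²)³) dr` equals the double power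
series of the Appell hypergeometric function `R·F₁(1/2; −1/2, 3/2; 3/2; R², −R²)`. -/
theorem travel_time_integral_appell_series (R : ℝ) (hR0 : 0 ≤ R) (hR1 : R < 1) :
    ∫ r in (0 : ℝ)..R, Real.sqrt ((1 - r ^ 2) / (1 + r ^ 2) ^ 3) =
      ∑' k : ℕ, ∑' l : ℕ, (-1 : ℝ) ^ l *
        (pochhammerReal (1 / 2) (k + l) * pochhammerReal (-(1 / 2)) k *
            pochhammerReal (3 / 2) l) /
          (pochhammerReal (3 / 2) (k + l) * (Nat.factorial k) * (Nat.factorial l)) *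
        R ^ (2 * (k + l) + 1) := by
  have hseries : ∀ r ∈ Set.Icc 0 R,
      HasSum (fun p : ℕ × ℕ => travelTimeCoeff p * r ^ (2 * (p.1 + p.2)))
        (√((1 - r ^ 2) / (1 + r ^ 2) ^ 3)) := fun r hr => by
    have hr2 : |r ^ 2| < 1 := by
      rw [abs_of_nonneg (sq_nonneg r)]
      nlinarith [hr.1, hr.2]
    simpa only [pow_mul] using hasSum_travelTimeCoeff_mul_pow hr2
  have h := hasSum_integral_of_hasSum_mul_pow hR0 hseries
  simp only [appellTerm_eq_travelTimeCoeff_mul]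
  rw [← h.summable.tsum_prod, h.tsum_eq]
end

section
/- Let I₁, I₂ be real with I₂ ≠ 0, let J ⊆ ℝ be an interval, and let R : J → (0,1) and θ : J → ℝ be differentiable functions satisfying, for all t ∈ J, f(R(t))·(R'(t)² + R(t)²θ'(t)²) = I₁ and f(R(t))·R(t)²·θ'(t) = I₂, where f(R) = (1 − R²)/(1 + R²)³. Then there exist a, b with 0 < a ≤ b < 1 such that a ≤ R(t) ≤ b for all t ∈ J. -/
/-- Oscillation of geodesics with nonzero angular momentum, in polar coordinates:
if along the curve `(R, θ)` the energy `I₁ = f(R)(R'² + R²θ'²)` and angular momentum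
`I₂ = f(R)R²θ'` are constant with `I₂ ≠ 0`, where `f(R) = (1 − R²)/(1 + R²)³`, then `R`
stays in a compact subinterval `[a, b] ⊆ (0,1)`. -/
theorem nonzero_angular_momentum_oscillation (I₁ I₂ : ℝ) (hI₂ : I₂ ≠ 0)
    (J : Set ℝ) (hJ : J.OrdConnected)
    (R θ R' θ' : ℝ → ℝ)
    (hRrange : ∀ t ∈ J, 0 < R t ∧ R t < 1)
    (hR : ∀ t ∈ J, HasDerivWithinAt R (R' t) J t)
    (hθ : ∀ t ∈ J, HasDerivWithinAt θ (θ' t) J t)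
    (hcons₁ : ∀ t ∈ J,
      (1 - R t ^ 2) / (1 + R t ^ 2) ^ 3 * (R' t ^ 2 + R t ^ 2 * θ' t ^ 2) = I₁)
    (hcons₂ : ∀ t ∈ J,
      (1 - R t ^ 2) / (1 + R t ^ 2) ^ 3 * R t ^ 2 * θ' t = I₂) :
    ∃ a b : ℝ, 0 < a ∧ a ≤ b ∧ b < 1 ∧ ∀ t ∈ J, a ≤ R t ∧ R t ≤ b := by
  rcases Set.eq_empty_or_nonempty J with hE | ⟨t₀, ht₀⟩
  · exact ⟨1/2, 1/2, by norm_num, le_refl _, by norm_num, by simp [hE]⟩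
  -- key pointwise inequality: I₂² ≤ (1 - R t²) * R t² * I₁
  have key : ∀ t ∈ J, I₂ ^ 2 ≤ (1 - R t ^ 2) * R t ^ 2 * I₁ := by
    intro t ht
    obtain ⟨hr0, hr1⟩ := hRrange t ht
    have hd : (1:ℝ) ≤ (1 + R t ^ 2) ^ 3 := by
      nlinarith [sq_nonneg (R t), sq_nonneg (R t ^ 2), sq_nonneg (R t ^ 3)]
    have hd0 : (0:ℝ) < (1 + R t ^ 2) ^ 3 := by positivity
    have h1 := hcons₁ t ht
    have h2 := hcons₂ t ht
    have h1' : (1 - R t ^ 2) * (R' t ^ 2 + R t ^ 2 * θ' t ^ 2)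
        = I₁ * (1 + R t ^ 2) ^ 3 := by
      field_simp at h1; linarith
    have h2' : (1 - R t ^ 2) * R t ^ 2 * θ' t = I₂ * (1 + R t ^ 2) ^ 3 := by
      field_simp at h2; linarith
    have hnum : 0 < 1 - R t ^ 2 := by nlinarith
    have key' : I₂ ^ 2 * ((1 + R t ^ 2) ^ 3) ^ 2
        ≤ (1 - R t ^ 2) * R t ^ 2 * I₁ * ((1 + R t ^ 2) ^ 3) ^ 2 := by
      have e1 : I₂ ^ 2 * ((1 + R t ^ 2) ^ 3) ^ 2
          = ((1 - R t ^ 2) * R t ^ 2 * θ' t) ^ 2 := by rw [h2']; ring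
      have e2 : (1 - R t ^ 2) * R t ^ 2 * I₁ * ((1 + R t ^ 2) ^ 3) ^ 2
          = (1 - R t ^ 2) * R t ^ 2 * (1 + R t ^ 2) ^ 3
            * ((1 - R t ^ 2) * (R' t ^ 2 + R t ^ 2 * θ' t ^ 2)) := by
        rw [h1']; ring
      rw [e1, e2]
      have ha : 0 ≤ (1 - R t ^ 2) ^ 2 * R t ^ 2 * (1 + R t ^ 2) ^ 3 * R' t ^ 2 := by
        positivity
      have hb : 0 ≤ (1 - R t ^ 2) ^ 2 * (R t ^ 2) ^ 2 * θ' t ^ 2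
          * ((1 + R t ^ 2) ^ 3 - 1) :=
        mul_nonneg (by positivity) (by linarith)
      nlinarith [ha, hb]
    exact le_of_mul_le_mul_right key' (by positivity)
  have hI₁pos : 0 < I₁ := by
    by_contra h
    push_neg at h
    have hk := key t₀ ht₀
    obtain ⟨hr0, hr1⟩ := hRrange t₀ ht₀
    have hnp : 0 < (1 - R t₀ ^ 2) * R t₀ ^ 2 :=
      mul_pos (by nlinarith) (pow_pos hr0 2)
    have hI2sq : 0 < I₂ ^ 2 := by positivity
    nlinarith [hk, hI2sq, mul_nonpos_of_nonneg_of_nonpos hnp.le h]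
  set c : ℝ := I₂ ^ 2 / I₁ with hc
  have hc0 : 0 < c := div_pos (by positivity) hI₁pos
  -- pointwise bounds: c ≤ R t ^2 and R t ^2 ≤ 1 - c
  have bounds : ∀ t ∈ J, c ≤ R t ^ 2 ∧ R t ^ 2 ≤ 1 - c := by
    intro t ht
    obtain ⟨hr0, hr1⟩ := hRrange t ht
    have hk := key t ht
    have hc' : c * I₁ ≤ (1 - R t ^ 2) * R t ^ 2 * I₁ := by
      rw [hc, div_mul_cancel₀ _ (ne_of_gt hI₁pos)]; exact hk
    have hcle : c ≤ (1 - R t ^ 2) * R t ^ 2 :=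
      le_of_mul_le_mul_right (by linarith) hI₁pos
    constructor
    · nlinarith [hcle, sq_nonneg (R t ^ 2)]
    · nlinarith [hcle, sq_nonneg (1 - R t ^ 2)]
  refine ⟨Real.sqrt c, Real.sqrt (1 - c), Real.sqrt_pos.mpr hc0, ?_, ?_, ?_⟩
  · have := bounds t₀ ht₀
    exact Real.sqrt_le_sqrt (by linarith [this.1, this.2])
  · have h1c : 1 - c < 1 := by linarith
    calc Real.sqrt (1 - c) < Real.sqrt 1 := by
          apply Real.sqrt_lt_sqrt ?_ h1c
          have := bounds t₀ ht₀
          have := (hRrange t₀ ht₀).1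
          nlinarith [this, (bounds t₀ ht₀).2, sq_nonneg (R t₀)]
      _ = 1 := Real.sqrt_one
  · intro t ht
    obtain ⟨hr0, hr1⟩ := hRrange t ht
    obtain ⟨hb1, hb2⟩ := bounds t ht
    constructor
    · have : Real.sqrt c ≤ Real.sqrt (R t ^ 2) := Real.sqrt_le_sqrt hb1
      rwa [Real.sqrt_sq hr0.le] at this
    · have : Real.sqrt (R t ^ 2) ≤ Real.sqrt (1 - c) := Real.sqrt_le_sqrt hb2
      rwa [Real.sqrt_sq hr0.le] at this
end
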